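/- arXiv:2407.18669 — 3 statements merged into one kernel-verified Lean document; each statement's English description precedes it below -/
import Mathlib

section
/- The function w₁(τ) = 2(ε+r)τ / (sqrt((a+s+τc)² + 4τb(ε+r)) + (a+s+τc)) is strictly increasing on [0,∞), assuming ε + r > 0. -/
/-!
Dividing the equation `b w² + (a + s + τ c) w = (ε + r) τ` satisfied by `w₁ τ` by `τ > 0` gives
`(b / τ) w² + ((a + s) / τ + c) w = ε + r`, whose coefficients strictly decrease in `τ`.
In the rationalized form of the positive root this makes the denominator strictly decrease,
so the root strictly increases; at `τ = 0` the root is `0`.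
-/

/-- The positive root `(√(p² + 4 b m) - p) / (2 b)` of `b w² + p w = m`, rationalized. -/
noncomputable def posRoot (b p m : ℝ) : ℝ := 2 * m / (Real.sqrt (p ^ 2 + 4 * b * m) + p)

lemma posRoot_pos {b p m : ℝ} (hp : 0 < p) (hm : 0 < m) : 0 < posRoot b p m := by
  unfold posRoot
  positivity

lemma posRoot_mul_mul {τ : ℝ} (hτ : 0 < τ) (b q m : ℝ) :
    posRoot b (τ * q) (τ * m) = posRoot (b / τ) q m := by
  have hsq : (τ * q) ^ 2 + 4 * b * (τ * m) = τ ^ 2 * (q ^ 2 + 4 * (b / τ) * m) := by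
    field_simp
  have hsqrt : Real.sqrt ((τ * q) ^ 2 + 4 * b * (τ * m))
      = τ * Real.sqrt (q ^ 2 + 4 * (b / τ) * m) := by
    rw [hsq, Real.sqrt_mul (sq_nonneg τ), Real.sqrt_sq hτ.le]
  rw [posRoot, posRoot, hsqrt, ← mul_add, mul_left_comm, mul_div_mul_left _ _ hτ.ne']

lemma posRoot_lt_posRoot {b b' q q' m : ℝ} (hb : b' ≤ b) (hq' : 0 < q') (hq : q' < q)
    (hm : 0 < m) : posRoot b q m < posRoot b' q' m := by
  unfold posRoot
  apply div_lt_div_of_pos_left (by positivity) (by positivity)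
  exact add_lt_add_of_le_of_lt (Real.sqrt_le_sqrt (by gcongr)) hq

theorem stmt_3_general (a s c b r ε : ℝ) (has : 0 < a + s) (hb : 0 < b) (hc : 0 ≤ c)
    (hre : 0 < ε + r) (G w₁ : ℝ → ℝ)
    (hG : ∀ τ, G τ = Real.sqrt ((a + s + τ * c) ^ 2 + 4 * τ * b * (ε + r)) + (a + s + τ * c))
    (hw : ∀ τ, w₁ τ = 2 * (ε + r) * τ / G τ) :
    StrictMonoOn w₁ (Set.Ici (0 : ℝ)) := by
  have hw_pos : ∀ τ, 0 < τ → w₁ τ = posRoot (b / τ) ((a + s) / τ + c) (ε + r) := by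
    intro τ hτ
    have hp : τ * ((a + s) / τ + c) = a + s + τ * c := by field_simp
    rw [← posRoot_mul_mul hτ, hp, hw, hG, posRoot]
    ring_nf
  intro x hx y hy hxy
  have hy₀ : 0 < y := lt_of_le_of_lt hx hxy
  have hq_pos : 0 < (a + s) / y + c := by positivity
  rcases (Set.mem_Ici.mp hx).eq_or_lt with rfl | hx₀
  · rw [hw 0, hw_pos y hy₀, mul_zero, zero_div]
    exact posRoot_pos hq_pos hre
  · rw [hw_pos x hx₀, hw_pos y hy₀]
    refine posRoot_lt_posRoot ?_ hq_pos ?_ hre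
    · exact div_le_div_of_nonneg_left hb.le hx₀ hxy.le
    · gcongr

theorem stmt_3 (a s c b r ε : ℝ) (has : 0 < a + s) (hb : 0 < b) (hc : 0 ≤ c)
    (hr : 0 ≤ r) (hε : 0 ≤ ε) (hre : 0 < ε + r) (G w₁ : ℝ → ℝ)
    (hG : ∀ τ, G τ = Real.sqrt ((a + s + τ * c) ^ 2 + 4 * τ * b * (ε + r)) + (a + s + τ * c))
    (hw : ∀ τ, w₁ τ = 2 * (ε + r) * τ / G τ) :
    StrictMonoOn w₁ (Set.Ici (0 : ℝ)) :=
  stmt_3_general a s c b r ε has hb hc hre G w₁ hG hw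
end

section
/- Fix ε ∈ [0,1] and a point x with parameters a, s, c, b, r, e, f, g ≥ 0, a+s > 0, b, f, r, s > 0. Define G^ε(τ), w₁^ε(τ) as before and F^ε(τ) = h₊^ε + ε − (2(ε+r)s(1/G^ε(0) − 1/G^ε(τ)) + g·w₁^ε(τ) + τ f), where h^ε = (ε+r)s/(a+s) − e and h₊^ε = max(h^ε, 0). Then F^ε is strictly decreasing in τ on [0,∞), and F^ε(0) ≥ ε. -/
theorem stmt_11 (a s c b r e f g ε : ℝ)
    (ha : 0 ≤ a) (hc : 0 ≤ c) (he : 0 ≤ e) (hg : 0 ≤ g)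
    (has : 0 < a + s) (hb : 0 < b) (hf : 0 < f) (hr : 0 < r) (hs : 0 < s)
    (hε0 : 0 ≤ ε) (hε1 : ε ≤ 1) (G w₁ F : ℝ → ℝ) (h hp : ℝ)
    (hG : ∀ τ, G τ = Real.sqrt ((a + s + τ * c) ^ 2 + 4 * τ * b * (ε + r)) + (a + s + τ * c))
    (hw : ∀ τ, w₁ τ = 2 * (ε + r) * τ / G τ)
    (hh : h = (ε + r) * s / (a + s) - e) (hhp : hp = max h 0)
    (hF : ∀ τ, F τ = hp + ε -
      (2 * (ε + r) * s * (1 / G 0 - 1 / G τ) + (g * w₁ τ + τ * f))) :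
    StrictAntiOn F (Set.Ici (0 : ℝ)) ∧ ε ≤ F 0 := by
  have hεr : 0 < ε + r := by linarith
  have hGpos : ∀ τ, 0 ≤ τ → 0 < G τ := by
    intro τ hτ
    rw [hG]
    have h1 : 0 < a + s + τ * c := by nlinarith
    have h2 : 0 ≤ Real.sqrt ((a + s + τ * c) ^ 2 + 4 * τ * b * (ε + r)) := Real.sqrt_nonneg _
    linarith
  have hGmono : ∀ τ₁ τ₂, 0 ≤ τ₁ → τ₁ ≤ τ₂ → G τ₁ ≤ G τ₂ := by
    intro τ₁ τ₂ h1 h2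
    rw [hG, hG]
    have h2' : 0 ≤ τ₂ - τ₁ := by linarith
    have key : (a + s + τ₁ * c) ^ 2 + 4 * τ₁ * b * (ε + r) ≤
        (a + s + τ₂ * c) ^ 2 + 4 * τ₂ * b * (ε + r) := by
      nlinarith [mul_nonneg (mul_nonneg h2' hc) (show (0:ℝ) ≤ 2 * (a + s) + (τ₁ + τ₂) * c by nlinarith),
        mul_nonneg h2' (mul_nonneg hb.le hεr.le)]
    have := Real.sqrt_le_sqrt key
    nlinarith
  have hwmono : ∀ τ₁ τ₂, 0 ≤ τ₁ → τ₁ ≤ τ₂ → w₁ τ₁ ≤ w₁ τ₂ := by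
    intro τ₁ τ₂ h1 h2
    have hp1 := hGpos τ₁ h1
    have hp2 := hGpos τ₂ (le_trans h1 h2)
    rw [hw, hw, div_le_div_iff₀ hp1 hp2]
    have hmul : τ₁ * G τ₂ ≤ τ₂ * G τ₁ := by
      rw [hG, hG]
      have hP : τ₁ ^ 2 * ((a + s + τ₂ * c) ^ 2 + 4 * τ₂ * b * (ε + r)) ≤
          τ₂ ^ 2 * ((a + s + τ₁ * c) ^ 2 + 4 * τ₁ * b * (ε + r)) := by
        have h2' : 0 ≤ τ₂ - τ₁ := by linarith
        have h2'' : 0 ≤ τ₂ := le_trans h1 h2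
        nlinarith [mul_nonneg (mul_nonneg h2' has.le)
            (show (0:ℝ) ≤ τ₂ * (a + s + τ₁ * c) + τ₁ * (a + s + τ₂ * c) by nlinarith [mul_nonneg h2'' has.le, mul_nonneg h1 has.le, mul_nonneg (mul_nonneg h2'' h1) hc]),
          mul_nonneg (mul_nonneg (mul_nonneg h2' h1) h2'') (mul_nonneg hb.le hεr.le)]
      have hs1 : τ₁ * Real.sqrt ((a + s + τ₂ * c) ^ 2 + 4 * τ₂ * b * (ε + r)) ≤
          τ₂ * Real.sqrt ((a + s + τ₁ * c) ^ 2 + 4 * τ₁ * b * (ε + r)) := by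
        have e1 : τ₁ * Real.sqrt ((a + s + τ₂ * c) ^ 2 + 4 * τ₂ * b * (ε + r)) =
            Real.sqrt (τ₁ ^ 2 * ((a + s + τ₂ * c) ^ 2 + 4 * τ₂ * b * (ε + r))) := by
          rw [Real.sqrt_mul (by positivity), Real.sqrt_sq h1]
        have e2 : τ₂ * Real.sqrt ((a + s + τ₁ * c) ^ 2 + 4 * τ₁ * b * (ε + r)) =
            Real.sqrt (τ₂ ^ 2 * ((a + s + τ₁ * c) ^ 2 + 4 * τ₁ * b * (ε + r))) := by
          rw [Real.sqrt_mul (by positivity), Real.sqrt_sq (le_trans h1 h2)]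
        rw [e1, e2]
        exact Real.sqrt_le_sqrt hP
      nlinarith
    nlinarith
  refine ⟨?_, ?_⟩
  · intro τ₁ h1 τ₂ h2 hlt
    simp only [Set.mem_Ici] at h1 h2
    rw [hF, hF]
    have hp1 := hGpos τ₁ h1
    have hp2 := hGpos τ₂ h2
    have hGle := hGmono τ₁ τ₂ h1 hlt.le
    have hinv : 1 / G τ₂ ≤ 1 / G τ₁ := one_div_le_one_div_of_le hp1 hGle
    have hw' := hwmono τ₁ τ₂ h1 hlt.le
    have hgw : g * w₁ τ₁ ≤ g * w₁ τ₂ := mul_le_mul_of_nonneg_left hw' hg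
    have hsεr : 0 < 2 * (ε + r) * s := by positivity
    have hA := mul_le_mul_of_nonneg_left hinv hsεr.le
    have hfτ : τ₁ * f < τ₂ * f := mul_lt_mul_of_pos_right hlt hf
    have e : ∀ τ : ℝ, 2 * (ε + r) * s * (1 / G 0 - 1 / G τ) =
        2 * (ε + r) * s * (1 / G 0) - 2 * (ε + r) * s * (1 / G τ) := fun τ => by ring
    rw [e τ₁, e τ₂]
    linarith
  · rw [hF, hw 0]
    have h0 : 0 ≤ hp := hhp ▸ le_max_right h 0
    have : 2 * (ε + r) * 0 / G 0 = 0 := by ring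
    rw [this]
    ring_nf
    linarith
end

section
/- Let ε ∈ (0,1] and suppose w₂^ε > 0 satisfies F^ε(w₂^ε) = 0, with w₁^ε = w₁^ε(w₂^ε) defined via \eqref above. Then −ε·w₂^ε ≥ (s − g·w₂^ε)·w₁^ε − (e + f·w₂^ε)·w₂^ε. -/
theorem stmt_13 (a s c b r e f g ε : ℝ)
    (ha : 0 ≤ a) (hc : 0 ≤ c) (he : 0 ≤ e) (hg : 0 ≤ g)
    (has : 0 < a + s) (hb : 0 < b) (hf : 0 < f) (hr : 0 < r) (hs : 0 < s)
    (hε0 : 0 < ε) (hε1 : ε ≤ 1) (G w₁fun F : ℝ → ℝ) (h hp w₂ w₁ : ℝ)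
    (hG : ∀ τ, G τ = Real.sqrt ((a + s + τ * c) ^ 2 + 4 * τ * b * (ε + r)) + (a + s + τ * c))
    (hw : ∀ τ, w₁fun τ = 2 * (ε + r) * τ / G τ)
    (hh : h = (ε + r) * s / (a + s) - e) (hhp : hp = max h 0)
    (hF : ∀ τ, F τ = hp + ε -
      (2 * (ε + r) * s * (1 / G 0 - 1 / G τ) + (g * w₁fun τ + τ * f)))
    (hw₂pos : 0 < w₂) (hroot : F w₂ = 0) (hw₁ : w₁ = w₁fun w₂) :
    (s - g * w₂) * w₁ - (e + f * w₂) * w₂ ≤ -(ε * w₂) := by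
  have hG0 : G 0 = 2 * (a + s) := by
    rw [hG]
    have : (a + s + 0 * c) ^ 2 + 4 * 0 * b * (ε + r) = (a + s) ^ 2 := by ring
    rw [this, Real.sqrt_sq has.le]; ring
  have hEq := hF w₂
  rw [hroot, hG0, hw] at hEq
  -- key identity: s * w₁ = w₂ * (2*(ε+r)*s * (1 / G w₂)))
  have hkey : s * w₁ = w₂ * (2 * (ε + r) * s * (1 / G w₂)) := by
    rw [hw₁, hw]; simp only [one_div, div_eq_mul_inv]; ring
  have hhge : h ≤ hp := by rw [hhp]; exact le_max_left _ _
  have h2s : 2 * (ε + r) * s * (1 / (2 * (a + s)) - 1 / G w₂)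
      = (ε + r) * s / (a + s) - 2 * (ε + r) * s * (1 / G w₂) := by
    have : (2 * (ε + r) * s) * (1 / (2 * (a + s))) = (ε + r) * s / (a + s) := by
      field_simp
    linarith [this, mul_sub (2 * (ε + r) * s) (1 / (2 * (a + s))) (1 / G w₂)]
  rw [h2s] at hEq
  -- from hEq : 0 = hp + ε - (2(ε+r)s(1/(2(a+s)) - 1/G w₂) + (g * w₁fun w₂ + w₂ f))
  have hineq : ε - e ≤ g * w₁ + w₂ * f - 2 * (ε + r) * s * (1 / G w₂) := by
    have hgw : g * (2 * (ε + r) * w₂ / G w₂) = g * w₁ := by rw [hw₁, hw]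
    rw [hgw] at hEq
    linarith [hhge, hh, h2s, hEq]
  nlinarith [mul_le_mul_of_nonneg_right hineq hw₂pos.le, hkey]
end
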